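/- arXiv:1809.08820 — 7 statements merged into one kernel-verified Lean document; each statement's English description precedes it below -/
import Mathlib

section
/- Let H be a real inner product space, Ψ : ℝ^m → H linear with invertible Gram matrix K = Ψ*Ψ, and S an invertible positive definite m×m matrix. Define Σ = (I - Ψ K⁻¹ Ψ*) + Ψ K⁻¹ S K⁻¹ Ψ*. Then Σ is invertible with inverse Σ⁻¹ = (I - Ψ K⁻¹ Ψ*) + Ψ S⁻¹ Ψ*. -/
open scoped RealInnerProductSpace

/-- Inversion identity for the orthogonally decoupled covariance operator:
`Σ = (I - Ψ K⁻¹ Ψ*) + Ψ K⁻¹ S K⁻¹ Ψ*` has inverse `(I - Ψ K⁻¹ Ψ*) + Ψ S⁻¹ Ψ*`. -/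
theorem stmt2 {H : Type*} [NormedAddCommGroup H] [InnerProductSpace ℝ H] {m : ℕ}
    (Ψ : EuclideanSpace ℝ (Fin m) →ₗ[ℝ] H)
    (Ψs : H →ₗ[ℝ] EuclideanSpace ℝ (Fin m))
    (hadj : ∀ (x : EuclideanSpace ℝ (Fin m)) (h : H), ⟪Ψ x, h⟫ = ⟪x, Ψs h⟫)
    (Kinv : EuclideanSpace ℝ (Fin m) →ₗ[ℝ] EuclideanSpace ℝ (Fin m))
    (hK1 : (Ψs ∘ₗ Ψ) ∘ₗ Kinv = LinearMap.id)
    (hK2 : Kinv ∘ₗ (Ψs ∘ₗ Ψ) = LinearMap.id)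
    (S Sinv : EuclideanSpace ℝ (Fin m) →ₗ[ℝ] EuclideanSpace ℝ (Fin m))
    (hSsym : ∀ x y, ⟪S x, y⟫ = ⟪x, S y⟫)
    (hSpos : ∀ x, x ≠ 0 → 0 < ⟪x, S x⟫)
    (hS1 : S ∘ₗ Sinv = LinearMap.id) (hS2 : Sinv ∘ₗ S = LinearMap.id) :
    ((LinearMap.id - Ψ ∘ₗ Kinv ∘ₗ Ψs) + Ψ ∘ₗ Kinv ∘ₗ S ∘ₗ Kinv ∘ₗ Ψs) ∘ₗ
        ((LinearMap.id - Ψ ∘ₗ Kinv ∘ₗ Ψs) + Ψ ∘ₗ Sinv ∘ₗ Ψs) = LinearMap.id ∧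
      ((LinearMap.id - Ψ ∘ₗ Kinv ∘ₗ Ψs) + Ψ ∘ₗ Sinv ∘ₗ Ψs) ∘ₗ
        ((LinearMap.id - Ψ ∘ₗ Kinv ∘ₗ Ψs) + Ψ ∘ₗ Kinv ∘ₗ S ∘ₗ Kinv ∘ₗ Ψs) = LinearMap.id := by
  have hK1' : ∀ x, Ψs (Ψ (Kinv x)) = x := fun x => LinearMap.ext_iff.mp hK1 x
  have hK2' : ∀ x, Kinv (Ψs (Ψ x)) = x := fun x => LinearMap.ext_iff.mp hK2 x
  have hS1' : ∀ x, S (Sinv x) = x := fun x => LinearMap.ext_iff.mp hS1 x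
  have hS2' : ∀ x, Sinv (S x) = x := fun x => LinearMap.ext_iff.mp hS2 x
  constructor <;>
  · apply LinearMap.ext
    intro h
    simp [LinearMap.sub_apply, LinearMap.comp_apply, map_sub, map_add,
      hK1', hK2', hS1', hS2']
end

section
/- With Σ = (I - Ψ_β K_β⁻¹ Ψ_β*) + Ψ_β K_β⁻¹ S K_β⁻¹ Ψ_β* and μ = (I - Ψ_β K_β⁻¹ Ψ_β*) Ψ_γ a_γ + Ψ_β a_β, one has Σ⁻¹ μ = (I - Ψ_β K_β⁻¹ Ψ_β*) Ψ_γ a_γ + Ψ_β S⁻¹ K_β a_β, where K_β = Ψ_β* Ψ_β is invertible and S is invertible positive definite. -/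
open scoped RealInnerProductSpace

/-- With the orthogonally decoupled basis, `Σ⁻¹ μ = (I - Ψ_β K_β⁻¹ Ψ_β*) Ψ_γ a_γ + Ψ_β S⁻¹ K_β a_β`. -/
theorem stmt3 {H : Type*} [NormedAddCommGroup H] [InnerProductSpace ℝ H] {mβ mγ : ℕ}
    (Ψβ : EuclideanSpace ℝ (Fin mβ) →ₗ[ℝ] H)
    (Ψγ : EuclideanSpace ℝ (Fin mγ) →ₗ[ℝ] H)
    (Ψβs : H →ₗ[ℝ] EuclideanSpace ℝ (Fin mβ))
    (hadj : ∀ (x : EuclideanSpace ℝ (Fin mβ)) (h : H), ⟪Ψβ x, h⟫ = ⟪x, Ψβs h⟫)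
    (Kinv : EuclideanSpace ℝ (Fin mβ) →ₗ[ℝ] EuclideanSpace ℝ (Fin mβ))
    (hK1 : (Ψβs ∘ₗ Ψβ) ∘ₗ Kinv = LinearMap.id)
    (hK2 : Kinv ∘ₗ (Ψβs ∘ₗ Ψβ) = LinearMap.id)
    (S Sinv : EuclideanSpace ℝ (Fin mβ) →ₗ[ℝ] EuclideanSpace ℝ (Fin mβ))
    (hSsym : ∀ x y, ⟪S x, y⟫ = ⟪x, S y⟫)
    (hSpos : ∀ x, x ≠ 0 → 0 < ⟪x, S x⟫)
    (hS1 : S ∘ₗ Sinv = LinearMap.id) (hS2 : Sinv ∘ₗ S = LinearMap.id)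
    (aγ : EuclideanSpace ℝ (Fin mγ)) (aβ : EuclideanSpace ℝ (Fin mβ))
    (SigInv : H →ₗ[ℝ] H)
    (hSig1 : ((LinearMap.id - Ψβ ∘ₗ Kinv ∘ₗ Ψβs) + Ψβ ∘ₗ Kinv ∘ₗ S ∘ₗ Kinv ∘ₗ Ψβs) ∘ₗ SigInv
        = LinearMap.id)
    (hSig2 : SigInv ∘ₗ ((LinearMap.id - Ψβ ∘ₗ Kinv ∘ₗ Ψβs) + Ψβ ∘ₗ Kinv ∘ₗ S ∘ₗ Kinv ∘ₗ Ψβs)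
        = LinearMap.id) :
    SigInv (((LinearMap.id : H →ₗ[ℝ] H) - Ψβ ∘ₗ Kinv ∘ₗ Ψβs) (Ψγ aγ) + Ψβ aβ)
      = ((LinearMap.id : H →ₗ[ℝ] H) - Ψβ ∘ₗ Kinv ∘ₗ Ψβs) (Ψγ aγ) + Ψβ (Sinv ((Ψβs ∘ₗ Ψβ) aβ)) := by
  set Sg : H →ₗ[ℝ] H :=
    ((LinearMap.id - Ψβ ∘ₗ Kinv ∘ₗ Ψβs) + Ψβ ∘ₗ Kinv ∘ₗ S ∘ₗ Kinv ∘ₗ Ψβs) with hSg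
  have hinv : ∀ x : H, SigInv (Sg x) = x := fun x => LinearMap.congr_fun hSig2 x
  have hKid1 : ∀ x, Ψβs (Ψβ (Kinv x)) = x := fun x => LinearMap.congr_fun hK1 x
  have hKid2 : ∀ x, Kinv (Ψβs (Ψβ x)) = x := fun x => LinearMap.congr_fun hK2 x
  have hSid1 : ∀ x, S (Sinv x) = x := fun x => LinearMap.congr_fun hS1 x
  set v : H := Ψγ aγ
  set rhs : H := ((LinearMap.id : H →ₗ[ℝ] H) - Ψβ ∘ₗ Kinv ∘ₗ Ψβs) v
      + Ψβ (Sinv ((Ψβs ∘ₗ Ψβ) aβ)) with hrhs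
  have key : Sg rhs = ((LinearMap.id : H →ₗ[ℝ] H) - Ψβ ∘ₗ Kinv ∘ₗ Ψβs) v + Ψβ aβ := by
    simp only [hSg, hrhs, LinearMap.add_apply, LinearMap.sub_apply, LinearMap.comp_apply,
      LinearMap.id_apply, map_add, map_sub, hKid1, hKid2, hSid1]
    abel
  calc SigInv (((LinearMap.id : H →ₗ[ℝ] H) - Ψβ ∘ₗ Kinv ∘ₗ Ψβs) v + Ψβ aβ)
      = SigInv (Sg rhs) := by rw [key]
    _ = rhs := hinv rhs
end

section
/- For Gaussian measures p = N(0, I) and q = N(μ, Σ) on ℝ^d with μ = Φ a and Σ = (I - Φ K⁻¹ Φᵀ) + Φ K⁻¹ S K⁻¹ Φᵀ, where Φ is a d×m matrix with full column rank, K = ΦᵀΦ, and S ≻ 0, the KL divergence is KL(q‖p) = ½( aᵀ K a + tr(S K⁻¹) - log det S + log det K - m ). -/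
/-!
Write `Σ = I + Φ C Φᵀ` with `C = K⁻¹ S K⁻¹ - K⁻¹`. Since `K C = S K⁻¹ - I`, cycling the trace gives
`tr Σ = d - m + tr (S K⁻¹)`, and Sylvester's identity `det (I + A B) = det (I + B A)` gives
`det Σ = det (S K⁻¹) = det S / det K`. Moreover `μᵀμ = aᵀ K a`, and `K` is positive definite
because `Φ` is injective, so both logarithms are taken of positive numbers.
-/

open Matrix

namespace Matrix

variable {n m R : Type*} [Fintype n] [Fintype m]

theorem mulVec_dotProduct_mulVec [CommSemiring R] (A : Matrix n m R) (v w : m → R) :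
    A *ᵥ v ⬝ᵥ A *ᵥ w = v ⬝ᵥ (Aᵀ * A) *ᵥ w := by
  rw [← mulVec_mulVec, dotProduct_mulVec v, vecMul_transpose]

theorem one_add_mul_inv_mul_mul_inv_sub_inv [DecidableEq m] [CommRing R] (S : Matrix m m R)
    {K : Matrix m m R} (hK : IsUnit K.det) :
    1 + K * (K⁻¹ * S * K⁻¹ - K⁻¹) = S * K⁻¹ := by
  rw [Matrix.mul_sub, mul_nonsing_inv _ hK, ← Matrix.mul_assoc, ← Matrix.mul_assoc,
    mul_nonsing_inv _ hK, Matrix.one_mul]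
  abel

end Matrix

section DecoupledCov

variable {n m R : Type*} [Fintype n] [Fintype m] [DecidableEq n] [DecidableEq m]

noncomputable def decoupledCov [CommRing R] (Φ : Matrix n m R) (S : Matrix m m R) :
    Matrix n n R :=
  1 - Φ * (Φᵀ * Φ)⁻¹ * Φᵀ + Φ * (Φᵀ * Φ)⁻¹ * S * (Φᵀ * Φ)⁻¹ * Φᵀ

theorem decoupledCov_eq_one_add [CommRing R] (Φ : Matrix n m R) (S : Matrix m m R) :
    decoupledCov Φ S = 1 + Φ * ((Φᵀ * Φ)⁻¹ * S * (Φᵀ * Φ)⁻¹ - (Φᵀ * Φ)⁻¹) * Φᵀ := by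
  simp only [decoupledCov, Matrix.mul_sub, Matrix.sub_mul, Matrix.mul_assoc]
  abel

theorem trace_decoupledCov [CommRing R] {Φ : Matrix n m R} (S : Matrix m m R)
    (hK : IsUnit (Φᵀ * Φ).det) :
    (decoupledCov Φ S).trace = Fintype.card n - Fintype.card m + (S * (Φᵀ * Φ)⁻¹).trace := by
  have hm := congrArg trace (one_add_mul_inv_mul_mul_inv_sub_inv S hK)
  rw [trace_add, trace_one, Matrix.mul_assoc, ← trace_mul_comm] at hm
  rw [decoupledCov_eq_one_add, trace_add, trace_one, ← hm]
  ring

theorem det_decoupledCov [Field R] {Φ : Matrix n m R} (S : Matrix m m R)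
    (hK : IsUnit (Φᵀ * Φ).det) :
    (decoupledCov Φ S).det = S.det / (Φᵀ * Φ).det := by
  rw [decoupledCov_eq_one_add, det_one_add_mul_comm, ← Matrix.mul_assoc,
    one_add_mul_inv_mul_mul_inv_sub_inv S hK, det_mul, det_nonsing_inv, Ring.inverse_eq_inv',
    div_eq_mul_inv]

end DecoupledCov

/-- KL divergence of the decoupled-basis Gaussian posterior from the standard normal prior,
via the standard formula `KL(N(μ,Σ)‖N(0,I)) = ½(tr Σ + μᵀμ - d - log det Σ)`. -/
theorem stmt4 {d m : ℕ} (Φ : Matrix (Fin d) (Fin m) ℝ)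
    (hΦ : Function.Injective Φ.mulVec)
    (S : Matrix (Fin m) (Fin m) ℝ) (hS : S.PosDef)
    (a : Fin m → ℝ) :
    let K : Matrix (Fin m) (Fin m) ℝ := Φᵀ * Φ
    let μ : Fin d → ℝ := Φ *ᵥ a
    let Sig : Matrix (Fin d) (Fin d) ℝ :=
      (1 : Matrix (Fin d) (Fin d) ℝ) - Φ * K⁻¹ * Φᵀ + Φ * K⁻¹ * S * K⁻¹ * Φᵀ
    (1 / 2 : ℝ) * (Sig.trace + μ ⬝ᵥ μ - d - Real.log Sig.det)
      = (1 / 2 : ℝ) * (a ⬝ᵥ (K *ᵥ a) + (S * K⁻¹).trace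
          - Real.log S.det + Real.log K.det - m) := by
  dsimp only
  rw [← decoupledCov]
  have hK : (Φᵀ * Φ).PosDef := by
    simpa only [conjTranspose_eq_transpose_of_trivial] using PosDef.conjTranspose_mul_self Φ hΦ
  have hKdet : IsUnit (Φᵀ * Φ).det := hK.det_pos.ne'.isUnit
  rw [trace_decoupledCov S hKdet, det_decoupledCov S hKdet, mulVec_dotProduct_mulVec,
    Real.log_div hS.det_pos.ne' hK.det_pos.ne']
  simp only [Fintype.card_fin]
  ring
end

section
/- Let Q be symmetric positive definite, g, y, b ∈ ℝ^n, and A invertible with y = Av + b. The minimizer u* of u ↦ ⟨Aᵀg, u⟩ + ½(u - v)ᵀ AᵀQA (u - v) satisfies A u* + b = y - Q⁻¹ g. Hence the natural gradient descent update is invariant under invertible affine reparametrization x = Au + b. -/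
/-!
With `M = AᵀQA`, the objective is the quadratic `u ↦ ⟨Aᵀg, u⟩ + ½(u - v)ᵀM(u - v)`, and `M` is
positive definite because `Q` is and `A` is injective. Completing the square around
`u₀ = v - M⁻¹Aᵀg` shows that `u₀` is its only minimizer, and
`A u₀ + b = y - A M⁻¹ Aᵀ g = y - Q⁻¹ g` since `A (AᵀQA)⁻¹ Aᵀ = Q⁻¹`.
-/

open Matrix

section QuadraticModel

variable {ι : Type*} [Fintype ι]

noncomputable def quadraticModel (c : ι → ℝ) (M : Matrix ι ι ℝ) (v u : ι → ℝ) : ℝ :=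
  c ⬝ᵥ u + (1 / 2 : ℝ) * ((u - v) ⬝ᵥ (M *ᵥ (u - v)))

theorem quadraticModel_eq_add_of_mulVec_eq_neg {M : Matrix ι ι ℝ} (hM : Mᵀ = M)
    {c v u₀ : ι → ℝ} (hu₀ : M *ᵥ (u₀ - v) = -c) (u : ι → ℝ) :
    quadraticModel c M v u =
      quadraticModel c M v u₀ + (1 / 2 : ℝ) * ((u - u₀) ⬝ᵥ (M *ᵥ (u - u₀))) := by
  have hsymm : (u₀ - v) ⬝ᵥ (M *ᵥ (u - u₀)) = (u - u₀) ⬝ᵥ (M *ᵥ (u₀ - v)) := by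
    rw [dotProduct_mulVec, ← mulVec_transpose, hM, dotProduct_comm]
  have hsplit : u - v = (u₀ - v) + (u - u₀) := by abel
  simp only [quadraticModel, hsplit, mulVec_add, dotProduct_add, add_dotProduct, hsymm, hu₀,
    dotProduct_neg]
  rw [show c ⬝ᵥ u = c ⬝ᵥ u₀ + (u - u₀) ⬝ᵥ c by
    rw [dotProduct_comm (u - u₀), ← dotProduct_add, add_sub_cancel]]
  ring

variable [DecidableEq ι]

theorem eq_of_forall_quadraticModel_le {M : Matrix ι ι ℝ} (hM : M.PosDef) {c v u : ι → ℝ}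
    (hu : ∀ u', quadraticModel c M v u ≤ quadraticModel c M v u') :
    u = v - M⁻¹ *ᵥ c := by
  set u₀ := v - M⁻¹ *ᵥ c
  have hu₀ : M *ᵥ (u₀ - v) = -c := by
    rw [sub_sub_cancel_left, mulVec_neg, mulVec_mulVec,
      mul_nonsing_inv _ ((isUnit_iff_isUnit_det M).1 hM.isUnit), one_mulVec]
  have hMsymm : Mᵀ = M := by simpa using hM.isHermitian.eq
  have hnonpos : (u - u₀) ⬝ᵥ (M *ᵥ (u - u₀)) ≤ 0 := by
    have := quadraticModel_eq_add_of_mulVec_eq_neg hMsymm hu₀ u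
    linarith [hu u₀]
  by_contra hne
  have hpos := hM.dotProduct_mulVec_pos (sub_ne_zero_of_ne hne)
  rw [star_trivial] at hpos
  linarith

end QuadraticModel

theorem Matrix.mul_inv_transpose_mul_mul_mul_transpose {ι R : Type*} [Fintype ι] [DecidableEq ι]
    [CommRing R] {A : Matrix ι ι R} (hA : IsUnit A.det) (Q : Matrix ι ι R) :
    A * (Aᵀ * Q * A)⁻¹ * Aᵀ = Q⁻¹ := by
  have hAT : IsUnit Aᵀ.det := by rwa [det_transpose]
  rw [mul_inv_rev, mul_inv_rev, mul_nonsing_inv_cancel_left _ _ hA,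
    nonsing_inv_mul_cancel_right _ _ hAT]

/-- Invariance of the natural gradient step under invertible affine reparametrization:
any minimizer `u*` of `u ↦ ⟨Aᵀg, u⟩ + ½(u-v)ᵀAᵀQA(u-v)` satisfies `A u* + b = y - Q⁻¹ g`. -/
theorem stmt11 {n : ℕ} (Q : Matrix (Fin n) (Fin n) ℝ) (hQ : Q.PosDef)
    (A : Matrix (Fin n) (Fin n) ℝ) (hA : IsUnit A.det)
    (g b v y : Fin n → ℝ) (hy : y = A *ᵥ v + b) :
    ∀ u : Fin n → ℝ,
      (∀ u', (Aᵀ *ᵥ g) ⬝ᵥ u + (1 / 2 : ℝ) * ((u - v) ⬝ᵥ ((Aᵀ * Q * A) *ᵥ (u - v)))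
          ≤ (Aᵀ *ᵥ g) ⬝ᵥ u' + (1 / 2 : ℝ) * ((u' - v) ⬝ᵥ ((Aᵀ * Q * A) *ᵥ (u' - v)))) →
      A *ᵥ u + b = y - Q⁻¹ *ᵥ g := by
  intro u hu
  have hM : (Aᵀ * Q * A).PosDef := by
    simpa using hQ.conjTranspose_mul_mul_same
      (mulVec_injective_iff_isUnit.2 ((isUnit_iff_isUnit_det A).2 hA))
  rw [eq_of_forall_quadraticModel_le hM hu, hy, mulVec_sub, mulVec_mulVec, mulVec_mulVec,
    mul_inv_transpose_mul_mul_mul_transpose hA]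
  abel
end

section
/- Let K_β be symmetric positive definite and B symmetric positive semidefinite, both |β|×|β|. Then (K_β B K_β + K_β)⁻¹ exists and the matrix A = -K_β⁻¹ + (K_β B K_β + K_β)⁻¹ satisfies: for any linear map Ψ : ℝ^{|β|} → H with Ψ*Ψ = K_β, the operator (I + Ψ B Ψ*)⁻¹ = I + Ψ A Ψ*. -/
open scoped RealInnerProductSpace

private lemma stmt14_key {m : ℕ}
    (K B Kinv M : Module.End ℝ (EuclideanSpace ℝ (Fin m)))
    (h1 : K * Kinv = 1) (h2 : Kinv * K = 1)
    (hM : (K * B * K + K) * M = 1) (hM' : M * (K * B * K + K) = 1) :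
    ((-Kinv + M) + B + B * K * (-Kinv + M) = 0) ∧
    ((-Kinv + M) + B + (-Kinv + M) * (K * B) = 0) := by
  have E1 : B * K * M + M = Kinv := by
    have hK1 : K * (B * K * M + M) = 1 := by
      rw [← hM]; noncomm_ring
    calc B * K * M + M = (Kinv * K) * (B * K * M + M) := by rw [h2, one_mul]
      _ = Kinv * (K * (B * K * M + M)) := mul_assoc _ _ _
      _ = Kinv := by rw [hK1, mul_one]
  have E2 : M * K * B + M = Kinv := by
    have hK1 : (M * K * B + M) * K = 1 := by
      rw [← hM']; noncomm_ring
    calc M * K * B + M = (M * K * B + M) * (K * Kinv) := by rw [h1, mul_one]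
      _ = ((M * K * B + M) * K) * Kinv := (mul_assoc _ _ _).symm
      _ = Kinv := by rw [hK1, one_mul]
  constructor
  · calc (-Kinv + M) + B + B * K * (-Kinv + M)
        = -Kinv + M + B + (-(B * (K * Kinv)) + B * K * M) := by noncomm_ring
      _ = -Kinv + M + B + (-(B * 1) + B * K * M) := by rw [h1]
      _ = -Kinv + (B * K * M + M) := by noncomm_ring
      _ = 0 := by rw [E1, neg_add_cancel]
  · calc (-Kinv + M) + B + (-Kinv + M) * (K * B)
        = -Kinv + M + B + (-((Kinv * K) * B) + M * K * B) := by noncomm_ring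
      _ = -Kinv + M + B + (-(1 * B) + M * K * B) := by rw [h2]
      _ = -Kinv + (M * K * B + M) := by noncomm_ring
      _ = 0 := by rw [E2, neg_add_cancel]

/-- Equivalence of the inversely parametrized decoupled covariance with the additive one:
`(K_β B K_β + K_β)⁻¹` exists and `A = -K_β⁻¹ + (K_β B K_β + K_β)⁻¹` satisfies
`(I + Ψ B Ψ*)⁻¹ = I + Ψ A Ψ*`. -/
theorem stmt14 {H : Type*} [NormedAddCommGroup H] [InnerProductSpace ℝ H] {m : ℕ}
    (Kβ B : EuclideanSpace ℝ (Fin m) →ₗ[ℝ] EuclideanSpace ℝ (Fin m))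
    (hKsym : ∀ x y, ⟪Kβ x, y⟫ = ⟪x, Kβ y⟫)
    (hKpos : ∀ x, x ≠ 0 → 0 < ⟪x, Kβ x⟫)
    (hBsym : ∀ x y, ⟪B x, y⟫ = ⟪x, B y⟫)
    (hBpsd : ∀ x, 0 ≤ ⟪x, B x⟫) :
    ∃ M : EuclideanSpace ℝ (Fin m) →ₗ[ℝ] EuclideanSpace ℝ (Fin m),
      ((Kβ ∘ₗ B ∘ₗ Kβ + Kβ) ∘ₗ M = LinearMap.id ∧
        M ∘ₗ (Kβ ∘ₗ B ∘ₗ Kβ + Kβ) = LinearMap.id) ∧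
      ∀ (Ψ : EuclideanSpace ℝ (Fin m) →ₗ[ℝ] H)
        (Ψs : H →ₗ[ℝ] EuclideanSpace ℝ (Fin m)),
        (∀ x h, ⟪Ψ x, h⟫ = ⟪x, Ψs h⟫) → Ψs ∘ₗ Ψ = Kβ →
        ∀ Kinv : EuclideanSpace ℝ (Fin m) →ₗ[ℝ] EuclideanSpace ℝ (Fin m),
          Kβ ∘ₗ Kinv = LinearMap.id → Kinv ∘ₗ Kβ = LinearMap.id →
          (LinearMap.id + Ψ ∘ₗ B ∘ₗ Ψs) ∘ₗ (LinearMap.id + Ψ ∘ₗ (-Kinv + M) ∘ₗ Ψs)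
              = LinearMap.id ∧
          (LinearMap.id + Ψ ∘ₗ (-Kinv + M) ∘ₗ Ψs) ∘ₗ (LinearMap.id + Ψ ∘ₗ B ∘ₗ Ψs)
              = LinearMap.id := by
  set T : EuclideanSpace ℝ (Fin m) →ₗ[ℝ] EuclideanSpace ℝ (Fin m) :=
    Kβ ∘ₗ B ∘ₗ Kβ + Kβ with hT
  -- T is injective
  have hinj : Function.Injective T := by
    rw [← LinearMap.ker_eq_bot, LinearMap.ker_eq_bot']
    intro x hx
    by_contra hx0
    have h1 : ⟪x, T x⟫ = 0 := by rw [hx, inner_zero_right]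
    have h2 : 0 < ⟪x, T x⟫ := by
      have hb : (0:ℝ) ≤ ⟪x, Kβ (B (Kβ x))⟫ := by
        rw [← hKsym]
        exact hBpsd (Kβ x)
      have hk : (0:ℝ) < ⟪x, Kβ x⟫ := hKpos x hx0
      simp only [hT, LinearMap.add_apply, LinearMap.comp_apply, inner_add_right]
      linarith
    linarith
  have hsurj : Function.Surjective T := (LinearMap.injective_iff_surjective).mp hinj
  let e := LinearEquiv.ofBijective T ⟨hinj, hsurj⟩
  refine ⟨e.symm.toLinearMap, ⟨?_, ?_⟩, ?_⟩
  · exact LinearMap.ext fun x => e.apply_symm_apply x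
  · exact LinearMap.ext fun x => e.symm_apply_apply x
  · intro Ψ Ψs hadj hK Kinv hKi1 hKi2
    have hM1 : T * e.symm.toLinearMap = 1 := LinearMap.ext fun x => e.apply_symm_apply x
    have hM2 : e.symm.toLinearMap * T = 1 := LinearMap.ext fun x => e.symm_apply_apply x
    have hTmul : T = Kβ * B * Kβ + Kβ := by
      rw [hT]; rfl
    have hk1 : Kβ * Kinv = 1 := hKi1
    have hk2 : Kinv * Kβ = 1 := hKi2
    obtain ⟨key1, key2⟩ := stmt14_key Kβ B Kinv e.symm.toLinearMap hk1 hk2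
      (hTmul ▸ hM1) (hTmul ▸ hM2)
    have hy : ∀ z, Ψs (Ψ z) = Kβ z := fun z => LinearMap.ext_iff.mp hK z
    set A : EuclideanSpace ℝ (Fin m) →ₗ[ℝ] EuclideanSpace ℝ (Fin m) :=
      -Kinv + e.symm.toLinearMap with hA
    have key1' : ∀ y, A y + B y + B (Kβ (A y)) = 0 := by
      intro y
      have := congrArg (fun f => f y) key1
      simpa [Module.End.mul_apply, LinearMap.add_apply, hA] using this
    have key2' : ∀ y, A y + B y + A (Kβ (B y)) = 0 := by
      intro y
      have := congrArg (fun f => f y) key2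
      simpa [Module.End.mul_apply, LinearMap.add_apply, hA] using this
    constructor
    · ext h
      simp only [LinearMap.comp_apply, LinearMap.add_apply, LinearMap.id_apply,
        map_add, hy]
      have h3 : Ψ (A (Ψs h)) + Ψ (B (Ψs h)) + Ψ (B (Kβ (A (Ψs h)))) = 0 := by
        rw [← map_add, ← map_add, key1' (Ψs h), map_zero]
      have : h + Ψ (B (Ψs h)) + (Ψ (A (Ψs h)) + Ψ (B (Kβ (A (Ψs h))))) =
          h + (Ψ (A (Ψs h)) + Ψ (B (Ψs h)) + Ψ (B (Kβ (A (Ψs h))))) := by abel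
      rw [this, h3, add_zero]
    · ext h
      simp only [LinearMap.comp_apply, LinearMap.add_apply, LinearMap.id_apply,
        map_add, hy]
      have h3 : Ψ (B (Ψs h)) + Ψ (A (Ψs h)) + Ψ (A (Kβ (B (Ψs h)))) = 0 := by
        rw [← map_add, ← map_add]
        rw [show B (Ψs h) + A (Ψs h) + A (Kβ (B (Ψs h))) =
          A (Ψs h) + B (Ψs h) + A (Kβ (B (Ψs h))) by abel, key2' (Ψs h), map_zero]
      have : h + Ψ (A (Ψs h)) + (Ψ (B (Ψs h)) + Ψ (A (Kβ (B (Ψs h))))) =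
          h + (Ψ (B (Ψs h)) + Ψ (A (Ψs h)) + Ψ (A (Kβ (B (Ψs h))))) := by abel
      rw [this, h3, add_zero]
end

section
/- Let Σ = I + Ψ K⁻¹(S - K) K⁻¹ Ψ* where Ψ : ℝ^m → H is linear with K = Ψ*Ψ invertible and S symmetric positive definite. Then for all h ∈ H, ⟨h, Σ h⟩ = ‖h - P h‖² + (K⁻¹Ψ*h)ᵀ S (K⁻¹Ψ*h) ≥ 0, where P = Ψ K⁻¹ Ψ*; hence Σ is a positive semidefinite self-adjoint operator, and it is positive definite if S ≻ 0. -/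
open scoped RealInnerProductSpace

/-- Positivity of the sparse variational covariance operator
`Σ = I + Ψ K⁻¹ (S - K) K⁻¹ Ψ*`: for all `h`,
`⟪h, Σ h⟫ = ‖h - P h‖² + ⟪K⁻¹Ψ*h, S (K⁻¹Ψ*h)⟫ ≥ 0`, `Σ` is self-adjoint,
and it is positive definite since `S ≻ 0`. -/
theorem stmt15 {H : Type*} [NormedAddCommGroup H] [InnerProductSpace ℝ H] {m : ℕ}
    (Ψ : EuclideanSpace ℝ (Fin m) →ₗ[ℝ] H)
    (Ψs : H →ₗ[ℝ] EuclideanSpace ℝ (Fin m))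
    (hadj : ∀ (x : EuclideanSpace ℝ (Fin m)) (h : H), ⟪Ψ x, h⟫ = ⟪x, Ψs h⟫)
    (Kinv : EuclideanSpace ℝ (Fin m) →ₗ[ℝ] EuclideanSpace ℝ (Fin m))
    (hK1 : (Ψs ∘ₗ Ψ) ∘ₗ Kinv = LinearMap.id)
    (hK2 : Kinv ∘ₗ (Ψs ∘ₗ Ψ) = LinearMap.id)
    (S : EuclideanSpace ℝ (Fin m) →ₗ[ℝ] EuclideanSpace ℝ (Fin m))
    (hSsym : ∀ x y, ⟪S x, y⟫ = ⟪x, S y⟫)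
    (hSpd : ∀ x, x ≠ 0 → 0 < ⟪x, S x⟫) :
    let P : H →ₗ[ℝ] H := Ψ ∘ₗ Kinv ∘ₗ Ψs
    let Sig : H →ₗ[ℝ] H :=
      LinearMap.id + Ψ ∘ₗ Kinv ∘ₗ (S - Ψs ∘ₗ Ψ) ∘ₗ Kinv ∘ₗ Ψs
    (∀ h : H, ⟪h, Sig h⟫ = ‖h - P h‖ ^ 2 + ⟪Kinv (Ψs h), S (Kinv (Ψs h))⟫) ∧
    (∀ h : H, 0 ≤ ⟪h, Sig h⟫) ∧
    (∀ h h' : H, ⟪Sig h, h'⟫ = ⟪h, Sig h'⟫) ∧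
    (∀ h : H, h ≠ 0 → 0 < ⟪h, Sig h⟫) := by
  intro P Sig
  have hK1' : ∀ x, (Ψs ∘ₗ Ψ) (Kinv x) = x := fun x => congrFun (congrArg DFunLike.coe hK1) x
  have hK2' : ∀ x, Kinv ((Ψs ∘ₗ Ψ) x) = x := fun x => congrFun (congrArg DFunLike.coe hK2) x
  have hadj' : ∀ (h : H) (x : EuclideanSpace ℝ (Fin m)), ⟪h, Ψ x⟫ = ⟪Ψs h, x⟫ := by
    intro h x
    rw [real_inner_comm, hadj, real_inner_comm]
  have hKsym : ∀ x y : EuclideanSpace ℝ (Fin m), ⟪(Ψs ∘ₗ Ψ) x, y⟫ = ⟪x, (Ψs ∘ₗ Ψ) y⟫ := by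
    intro x y
    simp only [LinearMap.comp_apply]
    rw [← hadj, real_inner_comm, ← hadj, real_inner_comm]
  have hKinvsym : ∀ x y : EuclideanSpace ℝ (Fin m), ⟪Kinv x, y⟫ = ⟪x, Kinv y⟫ := by
    intro x y
    calc ⟪Kinv x, y⟫ = ⟪Kinv x, (Ψs ∘ₗ Ψ) (Kinv y)⟫ := by rw [hK1']
      _ = ⟪(Ψs ∘ₗ Ψ) (Kinv x), Kinv y⟫ := (hKsym _ _).symm
      _ = ⟪x, Kinv y⟫ := by rw [hK1']
  -- Sig h = h - Ψ u + Ψ (Kinv (S u)) with u = Kinv (Ψs h)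
  have hSig : ∀ h : H, Sig h = h - Ψ (Kinv (Ψs h)) + Ψ (Kinv (S (Kinv (Ψs h)))) := by
    intro h
    show h + (Ψ ∘ₗ Kinv ∘ₗ (S - Ψs ∘ₗ Ψ) ∘ₗ Kinv ∘ₗ Ψs) h = _
    simp only [LinearMap.comp_apply, LinearMap.sub_apply, map_sub]
    have h3 : Kinv (Ψs (Ψ (Kinv (Ψs h)))) = Kinv (Ψs h) := hK2' (Kinv (Ψs h))
    rw [h3]
    abel
  have hPh : ∀ h : H, P h = Ψ (Kinv (Ψs h)) := fun h => rfl
  have key : ∀ h : H, ⟪h, Sig h⟫ = ‖h - P h‖ ^ 2 + ⟪Kinv (Ψs h), S (Kinv (Ψs h))⟫ := by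
    intro h
    set u := Kinv (Ψs h) with hu
    have h2 : ⟪h, Ψ (Kinv (S u))⟫ = ⟪u, S u⟫ := by
      rw [hadj', ← hKinvsym]
    have horth : ⟪Ψ u, h - Ψ u⟫ = 0 := by
      have hK1'' : Ψs (Ψ u) = Ψs h := hK1' (Ψs h)
      rw [hadj, map_sub, inner_sub_right, hK1'', real_inner_comm, sub_self]
    have h1 : ⟪h, h - Ψ u⟫ = ‖h - Ψ u‖ ^ 2 := by
      have : ⟪h - Ψ u, h - Ψ u⟫ = ⟪h, h - Ψ u⟫ - ⟪Ψ u, h - Ψ u⟫ := by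
        rw [inner_sub_left]
      rw [← real_inner_self_eq_norm_sq, this, horth, sub_zero]
    rw [hSig, hPh, inner_add_right, h1, h2]
  refine ⟨key, ?_, ?_, ?_⟩
  · intro h
    rw [key h]
    have : 0 ≤ ⟪Kinv (Ψs h), S (Kinv (Ψs h))⟫ := by
      rcases eq_or_ne (Kinv (Ψs h)) 0 with h0 | h0
      · simp [h0]
      · exact (hSpd _ h0).le
    positivity
  · intro h h'
    have hB : ∀ x y : EuclideanSpace ℝ (Fin m),
        ⟪Kinv ((S - Ψs ∘ₗ Ψ) (Kinv x)), y⟫ = ⟪x, Kinv ((S - Ψs ∘ₗ Ψ) (Kinv y))⟫ := by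
      intro x y
      rw [hKinvsym]
      simp only [LinearMap.sub_apply, map_sub, inner_sub_left, inner_sub_right]
      rw [hSsym, hKsym, hKinvsym, hKinvsym]
    have e : ∀ g g' : H, ⟪Sig g, g'⟫ = ⟪g, g'⟫ + ⟪Kinv ((S - Ψs ∘ₗ Ψ) (Kinv (Ψs g))), Ψs g'⟫ := by
      intro g g'
      show ⟪g + (Ψ ∘ₗ Kinv ∘ₗ (S - Ψs ∘ₗ Ψ) ∘ₗ Kinv ∘ₗ Ψs) g, g'⟫ = _
      rw [inner_add_left]
      simp only [LinearMap.comp_apply]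
      rw [hadj]
    have e2 : ∀ g g' : H, ⟪g, Sig g'⟫ = ⟪g, g'⟫ + ⟪Ψs g, Kinv ((S - Ψs ∘ₗ Ψ) (Kinv (Ψs g')))⟫ := by
      intro g g'
      show ⟪g, g' + (Ψ ∘ₗ Kinv ∘ₗ (S - Ψs ∘ₗ Ψ) ∘ₗ Kinv ∘ₗ Ψs) g'⟫ = _
      rw [inner_add_right]
      simp only [LinearMap.comp_apply]
      rw [hadj']
    rw [e, e2]
    congr 1
    exact hB _ _
  · intro h hne
    rw [key h]
    rcases eq_or_ne (Kinv (Ψs h)) 0 with h0 | h0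
    · have hP0 : P h = 0 := by rw [hPh, h0, map_zero]
      have hne' : h - P h ≠ 0 := by rw [hP0, sub_zero]; exact hne
      have hpos : 0 < ‖h - P h‖ := norm_pos_iff.mpr hne'
      rw [h0]
      simp only [map_zero, inner_zero_left, add_zero]
      positivity
    · have h1 := hSpd _ h0
      have h2 : 0 ≤ ‖h - P h‖ ^ 2 := by positivity
      linarith
end

section
/- Let H be a real inner product space, Ψ_β : ℝ^{|β|} → H with K_β = Ψ_β*Ψ_β invertible, Ψ_γ : ℝ^{|γ|} → H, and suppose the functions μ₁ = (I - Ψ_β K_β⁻¹ Ψ_β*)Ψ_γ a_γ + Ψ_β a_β and μ₂ = (I - Ψ_β K_β⁻¹ Ψ_β*)Ψ_γ a_γ' + Ψ_β a_β' are equal, where additionally K_{γ⊥β} = Ψ_γ*(I - Ψ_β K_β⁻¹ Ψ_β*)Ψ_γ is invertible. Then a_γ = a_γ' and a_β = a_β'. -/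
open scoped RealInnerProductSpace

/-- Uniqueness of the orthogonally decoupled mean parametrization: the coefficients
`(a_γ, a_β)` are uniquely determined by `μ` when `K_β` and the projected Gram matrix
`K_{γ⊥β}` are invertible. -/
theorem stmt18 {H : Type*} [NormedAddCommGroup H] [InnerProductSpace ℝ H] {mβ mγ : ℕ}
    (Ψβ : EuclideanSpace ℝ (Fin mβ) →ₗ[ℝ] H)
    (Ψγ : EuclideanSpace ℝ (Fin mγ) →ₗ[ℝ] H)
    (Ψβs : H →ₗ[ℝ] EuclideanSpace ℝ (Fin mβ))
    (Ψγs : H →ₗ[ℝ] EuclideanSpace ℝ (Fin mγ))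
    (hadjβ : ∀ (x : EuclideanSpace ℝ (Fin mβ)) (h : H), ⟪Ψβ x, h⟫ = ⟪x, Ψβs h⟫)
    (hadjγ : ∀ (x : EuclideanSpace ℝ (Fin mγ)) (h : H), ⟪Ψγ x, h⟫ = ⟪x, Ψγs h⟫)
    (Kinv : EuclideanSpace ℝ (Fin mβ) →ₗ[ℝ] EuclideanSpace ℝ (Fin mβ))
    (hK1 : (Ψβs ∘ₗ Ψβ) ∘ₗ Kinv = LinearMap.id)
    (hK2 : Kinv ∘ₗ (Ψβs ∘ₗ Ψβ) = LinearMap.id)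
    (Tinv : EuclideanSpace ℝ (Fin mγ) →ₗ[ℝ] EuclideanSpace ℝ (Fin mγ))
    (hT1 : (Ψγs ∘ₗ ((LinearMap.id : H →ₗ[ℝ] H) - Ψβ ∘ₗ Kinv ∘ₗ Ψβs) ∘ₗ Ψγ) ∘ₗ Tinv
        = LinearMap.id)
    (hT2 : Tinv ∘ₗ (Ψγs ∘ₗ ((LinearMap.id : H →ₗ[ℝ] H) - Ψβ ∘ₗ Kinv ∘ₗ Ψβs) ∘ₗ Ψγ)
        = LinearMap.id)
    (aγ aγ' : EuclideanSpace ℝ (Fin mγ)) (aβ aβ' : EuclideanSpace ℝ (Fin mβ))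
    (hμ : ((LinearMap.id : H →ₗ[ℝ] H) - Ψβ ∘ₗ Kinv ∘ₗ Ψβs) (Ψγ aγ) + Ψβ aβ
        = ((LinearMap.id : H →ₗ[ℝ] H) - Ψβ ∘ₗ Kinv ∘ₗ Ψβs) (Ψγ aγ') + Ψβ aβ') :
    aγ = aγ' ∧ aβ = aβ' := by
  have hk1 : ∀ x, Ψβs (Ψβ (Kinv x)) = x := by
    intro x
    have := LinearMap.ext_iff.mp hK1 x
    simpa using this
  have hk2 : ∀ x, Kinv (Ψβs (Ψβ x)) = x := by
    intro x
    have := LinearMap.ext_iff.mp hK2 x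
    simpa using this
  have h1 : ∀ v : H, Ψβs (v - Ψβ (Kinv (Ψβs v))) = 0 := by
    intro v
    simp [map_sub, hk1]
  simp only [LinearMap.sub_apply, LinearMap.id_apply, LinearMap.comp_apply] at hμ
  -- apply Ψβs to hμ
  have h2 := congrArg Ψβs hμ
  simp only [map_add, map_sub, hk1, sub_self, zero_add] at h2
  have hβ : aβ = aβ' := by
    have := congrArg Kinv h2
    simpa [hk2] using this
  subst hβ
  have hγeq : Ψγ aγ - Ψβ (Kinv (Ψβs (Ψγ aγ))) = Ψγ aγ' - Ψβ (Kinv (Ψβs (Ψγ aγ'))) :=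
    add_right_cancel hμ
  have h3 := congrArg (fun v => Tinv (Ψγs v)) hγeq
  have ht2 : ∀ x, Tinv (Ψγs (Ψγ x - Ψβ (Kinv (Ψβs (Ψγ x))))) = x := by
    intro x
    have := LinearMap.ext_iff.mp hT2 x
    simpa [LinearMap.comp_apply, LinearMap.sub_apply] using this
  rw [ht2, ht2] at h3
  exact ⟨h3, rfl⟩
end
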